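/- arXiv:1309.6173 — 6 statements merged into one kernel-verified Lean document; each statement's English description precedes it below -/
import Mathlib

section
/- Let γ > 0 and define Φ̂(z) := (1 + z²/4)^(−γ/2) for z ≥ 0. Then for all z > 0, Φ̂''(z) + (z/2)·Φ̂'(z) + (γ/2)·Φ̂(z) ≥ (γ/4)·(1 + z²/4)^(−γ/2−1). -/
/-! Writing `u = 1 + z²/4` and `p = -γ/2`, a direct computation gives
`Φ̂'' + (z/2)Φ̂' + (γ/2)Φ̂ = (γ/4) u^(p-1) + p(p-1)(u-1) u^(p-2)`,
and the second term is nonnegative because `p(p-1) = γ(γ+2)/4 ≥ 0` and `u ≥ 1`. -/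

namespace OneAddSqDivFourRpow

theorem hasDerivAt_one_add_sq_div_four (x : ℝ) :
    HasDerivAt (fun y : ℝ => 1 + y ^ 2 / 4) (x / 2) x := by
  have h := ((hasDerivAt_pow 2 x).div_const 4).const_add 1
  exact h.congr_deriv (by ring)

theorem hasDerivAt_rpow (p x : ℝ) :
    HasDerivAt (fun y : ℝ => (1 + y ^ 2 / 4) ^ p)
      (p * (x / 2) * (1 + x ^ 2 / 4) ^ (p - 1)) x := by
  have h := (hasDerivAt_one_add_sq_div_four x).rpow_const (p := p) (Or.inl (by positivity))
  exact h.congr_deriv (by ring)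

theorem deriv_rpow (p : ℝ) :
    deriv (fun y : ℝ => (1 + y ^ 2 / 4) ^ p) =
      fun x => p * (x / 2) * (1 + x ^ 2 / 4) ^ (p - 1) :=
  funext fun x => (hasDerivAt_rpow p x).deriv

theorem deriv_deriv_rpow (p x : ℝ) :
    deriv (deriv fun y : ℝ => (1 + y ^ 2 / 4) ^ p) x =
      p / 2 * (1 + x ^ 2 / 4) ^ (p - 1) +
        p * (p - 1) * (x ^ 2 / 4) * (1 + x ^ 2 / 4) ^ (p - 2) := by
  rw [deriv_rpow]
  have h := (((hasDerivAt_id' x).div_const 2).const_mul p).mul (hasDerivAt_rpow (p - 1) x)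
  exact (h.congr_deriv (by ring_nf)).deriv

end OneAddSqDivFourRpow

/-- For `γ > 0` and `Φ̂ z = (1 + z²/4)^(−γ/2)`, for all `z > 0`,
`Φ̂''(z) + (z/2)Φ̂'(z) + (γ/2)Φ̂(z) ≥ (γ/4)(1 + z²/4)^(−γ/2−1)`. -/
theorem stmt0 (γ : ℝ) (hγ : 0 < γ) (Φ : ℝ → ℝ)
    (hΦ : ∀ z : ℝ, Φ z = (1 + z ^ 2 / 4) ^ (-(γ / 2))) :
    ∀ z > (0 : ℝ),
      deriv (deriv Φ) z + z / 2 * deriv Φ z + γ / 2 * Φ z ≥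
        γ / 4 * (1 + z ^ 2 / 4) ^ (-(γ / 2) - 1) := by
  intro z _
  obtain rfl : Φ = fun y => (1 + y ^ 2 / 4) ^ (-(γ / 2)) := funext hΦ
  rw [OneAddSqDivFourRpow.deriv_deriv_rpow, OneAddSqDivFourRpow.deriv_rpow]
  beta_reduce
  set p := -(γ / 2)
  set u := 1 + z ^ 2 / 4
  have hu0 : u ≠ 0 := by positivity
  have hpow : u ^ (p - 1) = u ^ (p - 2) * u := by
    rw [← Real.rpow_add_one hu0]; ring_nf
  have hpow' : u ^ p = u ^ (p - 2) * u * u := by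
    rw [← hpow, ← Real.rpow_add_one hu0, sub_add_cancel]
  have hremainder : 0 ≤ p * (p - 1) * (z ^ 2 / 4) * u ^ (p - 2) := by
    have : 0 ≤ p * (p - 1) := by simp only [p]; nlinarith
    positivity
  rw [hpow, hpow']
  linear_combination hremainder
end

section
/- Let γ ∈ (0,1) and let Φ be the solution of the initial value problem Φ''(z) + (z/2)Φ'(z) + (γ/2)Φ(z) = 0 on [0,∞) with Φ(0) = 1 and Φ'(0) = 0. Then Φ is positive and strictly decreasing on [0,∞). -/
/-!
With the weight `E z = exp (z² / 4)` the equation reads `(Φ' E)' = -(γ/2) Φ E`, while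
`s = Φ' + (z/2) Φ` satisfies `s' = ((1 - γ)/2) Φ` and `(Φ E)' = s E`. As long as `Φ ≥ 0` on
`[0, a]`, `s` increases from `s 0 = 0`, hence `Φ E` increases from `Φ 0 = 1` and
`Φ a ≥ exp (-a² / 4) > 0`; so `Φ` never reaches zero. Then `Φ' E` strictly decreases from `0`,
so `Φ' < 0` on `(0, ∞)`.
-/

open Set

lemma HasDerivAt.mul_exp_sq_div_four {f : ℝ → ℝ} {f' z : ℝ} (hf : HasDerivAt f f' z) :
    HasDerivAt (fun x => f x * Real.exp (x ^ 2 / 4))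
      ((f' + z / 2 * f z) * Real.exp (z ^ 2 / 4)) z := by
  have hE : HasDerivAt (fun x : ℝ => Real.exp (x ^ 2 / 4)) (Real.exp (z ^ 2 / 4) * (z / 2)) z := by
    have := ((hasDerivAt_pow 2 z).div_const 4).exp
    convert this using 2
    ring
  exact (hf.mul hE).congr_deriv (by ring)

lemma pos_of_nonneg_on_Icc_imp_pos {f : ℝ → ℝ} {x₀ : ℝ} (hf : ContinuousOn f (Ici x₀))
    (h₀ : 0 < f x₀) (h : ∀ a > x₀, (∀ z ∈ Icc x₀ a, 0 ≤ f z) → 0 < f a) :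
    ∀ z ≥ x₀, 0 < f z := by
  by_contra! ⟨z₁, hz₁, hfz₁⟩
  set S := Icc x₀ z₁ ∩ f ⁻¹' Iic 0
  have hS : IsCompact S :=
    isCompact_Icc.of_isClosed_subset
      ((hf.mono Icc_subset_Ici_self).preimage_isClosed_of_isClosed isClosed_Icc isClosed_Iic)
      inter_subset_left
  obtain ⟨a, haS, ha_min⟩ := hS.exists_isMinOn ⟨z₁, ⟨hz₁, le_rfl⟩, hfz₁⟩ continuousOn_id
  obtain ⟨⟨hx₀a, haz₁⟩, hfa⟩ := haS
  have hx₀a : x₀ < a := hx₀a.lt_of_ne (by rintro rfl; exact not_lt_of_ge hfa h₀)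
  have hpos : ∀ z ∈ Ico x₀ a, 0 < f z := fun z hz => by
    by_contra! hfz
    exact not_lt_of_ge (ha_min ⟨⟨hz.1, hz.2.le.trans haz₁⟩, hfz⟩) hz.2
  have hnonneg : closure (Ico x₀ a) ⊆ Icc x₀ a ∩ f ⁻¹' Ici 0 :=
    closure_minimal (fun z hz => ⟨Ico_subset_Icc_self hz, (hpos z hz).le⟩)
      ((hf.mono Icc_subset_Ici_self).preimage_isClosed_of_isClosed isClosed_Icc isClosed_Ici)
  rw [closure_Ico hx₀a.ne] at hnonneg
  exact not_lt_of_ge hfa (h a hx₀a fun z hz => (hnonneg hz).2)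

section HermiteTypeODE

variable {γ : ℝ} {Φ : ℝ → ℝ} (hΦ : ContDiff ℝ 2 Φ)
  (hode : ∀ z ≥ (0 : ℝ), deriv (deriv Φ) z + z / 2 * deriv Φ z + γ / 2 * Φ z = 0)
include hΦ hode

lemma hasDerivAt_deriv_add_mul_self {z : ℝ} (hz : 0 ≤ z) :
    HasDerivAt (fun x => deriv Φ x + x / 2 * Φ x) ((1 - γ) / 2 * Φ z) z := by
  have := (hΦ.differentiable_deriv_two z).hasDerivAt.add
    (((hasDerivAt_id z).div_const 2).mul (hΦ.differentiable two_ne_zero z).hasDerivAt)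
  exact this.congr_deriv (by simp only [id]; linarith [hode z hz])

lemma hasDerivAt_deriv_mul_exp {z : ℝ} (hz : 0 ≤ z) :
    HasDerivAt (fun x => deriv Φ x * Real.exp (x ^ 2 / 4))
      (-(γ / 2 * Φ z) * Real.exp (z ^ 2 / 4)) z := by
  have := (hΦ.differentiable_deriv_two z).hasDerivAt.mul_exp_sq_div_four
  rw [eq_neg_of_add_eq_zero_left (hode z hz)] at this
  exact this

lemma le_mul_exp_of_nonneg_on_Icc (hγ : γ ≤ 1) (h0' : 0 ≤ deriv Φ 0) {a : ℝ} (ha : 0 ≤ a)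
    (hnonneg : ∀ z ∈ Icc 0 a, 0 ≤ Φ z) : Φ 0 ≤ Φ a * Real.exp (a ^ 2 / 4) := by
  have hs := fun {z} (hz : z ∈ Icc 0 a) => hasDerivAt_deriv_add_mul_self hΦ hode hz.1
  have hs_mono : MonotoneOn (fun x => deriv Φ x + x / 2 * Φ x) (Icc 0 a) :=
    monotoneOn_of_hasDerivWithinAt_nonneg (convex_Icc 0 a)
      (fun z hz => (hs hz).continuousAt.continuousWithinAt)
      (fun z hz => (hs (interior_subset hz)).hasDerivWithinAt)
      (fun z hz => mul_nonneg (by linarith) (hnonneg z (interior_subset hz)))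
  have hs_nonneg : ∀ z ∈ Icc 0 a, 0 ≤ deriv Φ z + z / 2 * Φ z := fun z hz => by
    have := hs_mono (left_mem_Icc.2 ha) hz hz.1
    simp only [zero_div, zero_mul, add_zero] at this
    linarith
  have hr := fun z => ((hΦ.differentiable two_ne_zero z).hasDerivAt).mul_exp_sq_div_four
  have hr_mono : MonotoneOn (fun x => Φ x * Real.exp (x ^ 2 / 4)) (Icc 0 a) :=
    monotoneOn_of_hasDerivWithinAt_nonneg (convex_Icc 0 a)
      (fun z _ => (hr z).continuousAt.continuousWithinAt)
      (fun z _ => (hr z).hasDerivWithinAt)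
      (fun z hz => mul_nonneg (hs_nonneg z (interior_subset hz)) (Real.exp_pos _).le)
  simpa using hr_mono (left_mem_Icc.2 ha) (right_mem_Icc.2 ha) ha

lemma pos_on_Ici_of_ode (hγ : γ ≤ 1) (h0 : 0 < Φ 0) (h0' : 0 ≤ deriv Φ 0) : ∀ z ≥ 0, 0 < Φ z :=
  pos_of_nonneg_on_Icc_imp_pos hΦ.continuous.continuousOn h0 fun _ ha hnonneg =>
    pos_of_mul_pos_left (h0.trans_le (le_mul_exp_of_nonneg_on_Icc hΦ hode hγ h0' ha.le hnonneg))
      (Real.exp_pos _).le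

lemma deriv_neg_on_Ioi_of_ode (hγ : 0 < γ) (hpos : ∀ z ≥ 0, 0 < Φ z) (h0' : deriv Φ 0 ≤ 0) :
    ∀ z > 0, deriv Φ z < 0 := by
  have hu := fun {z} (hz : z ∈ Ici (0 : ℝ)) => hasDerivAt_deriv_mul_exp hΦ hode hz
  have hu_anti : StrictAntiOn (fun x => deriv Φ x * Real.exp (x ^ 2 / 4)) (Ici 0) :=
    strictAntiOn_of_hasDerivWithinAt_neg (convex_Ici 0)
      (fun z hz => (hu hz).continuousAt.continuousWithinAt)
      (fun z hz => (hu (interior_subset hz)).hasDerivWithinAt)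
      (fun z hz => mul_neg_of_neg_of_pos
        (neg_neg_of_pos (mul_pos (half_pos hγ) (hpos z (interior_subset hz)))) (Real.exp_pos _))
  intro z hz
  have hu_lt := hu_anti self_mem_Ici hz.le hz
  exact neg_of_mul_neg_left (hu_lt.trans_le (by simpa using h0')) (Real.exp_pos _).le

end HermiteTypeODE

/-- Let `γ ∈ (0,1)` and `Φ` solve `Φ'' + (z/2)Φ' + (γ/2)Φ = 0` on `[0,∞)`
with `Φ(0)=1`, `Φ'(0)=0`. Then `Φ` is positive and strictly decreasing on `[0,∞)`. -/
theorem stmt6 (γ : ℝ) (hγ : γ ∈ Set.Ioo (0 : ℝ) 1) (Φ : ℝ → ℝ)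
    (hsmooth : ContDiff ℝ 2 Φ)
    (hode : ∀ z ≥ (0 : ℝ), deriv (deriv Φ) z + z / 2 * deriv Φ z + γ / 2 * Φ z = 0)
    (h0 : Φ 0 = 1) (h0' : deriv Φ 0 = 0) :
    (∀ z ≥ (0 : ℝ), 0 < Φ z) ∧ StrictAntiOn Φ (Set.Ici (0 : ℝ)) := by
  have hpos := pos_on_Ici_of_ode hsmooth hode hγ.2.le (h0 ▸ one_pos) h0'.ge
  refine ⟨hpos, strictAntiOn_of_deriv_neg (convex_Ici 0) hsmooth.continuous.continuousOn ?_⟩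
  rw [interior_Ici]
  exact deriv_neg_on_Ioi_of_ode hsmooth hode hγ.1 hpos h0'.le
end

section
/- Let γ ∈ (0,1) and let Φ solve Φ''(z) + (z/2)Φ'(z) + (γ/2)Φ(z) = 0 with Φ(0)=1, Φ'(0)=0. Then there exist constants c > 0 and C > 0 such that c·z^(−γ) ≤ Φ(z) ≤ C·z^(−γ) for all z ≥ 1. -/
/-!
Put `h = Φ' + (z/2)Φ = e^{-z²/4} (e^{z²/4} Φ)'`. The equation reads `h' = (1-γ)/2 · Φ` and
`(e^{z²/4} Φ')' = -(γ/2) e^{z²/4} Φ`. While `Φ > 0` we have `h ≥ 0`, so `e^{z²/4} Φ` increases and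
`Φ` cannot reach zero; hence `Φ > 0`, `Φ' ≤ 0` and `h > 0` on `z > 0`.

The function `h z^(γ-1)` has derivative `-(1-γ) z^(γ-2) Φ' ≥ 0`, which together with `h ≤ zΦ/2`
gives the lower bound. Adding `(1-γ) z^(γ-2) Φ` makes it nonincreasing, so `h ≤ A z^(1-γ)`; then
`w = z^γ Φ` satisfies `w' ≤ (z/4)(4A - w)` for `z ≥ 2`, which keeps `w` bounded.
-/

open Real Set

theorem monotoneOn_of_hasDerivAt_nonneg {D : Set ℝ} (hD : Convex ℝ D) {f f' : ℝ → ℝ}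
    (hf : ∀ x ∈ D, HasDerivAt f (f' x) x) (hf' : ∀ x ∈ interior D, 0 ≤ f' x) :
    MonotoneOn f D :=
  monotoneOn_of_hasDerivWithinAt_nonneg hD (fun x hx ↦ (hf x hx).continuousAt.continuousWithinAt)
    (fun x hx ↦ (hf x (interior_subset hx)).hasDerivWithinAt) hf'

theorem antitoneOn_of_hasDerivAt_nonpos {D : Set ℝ} (hD : Convex ℝ D) {f f' : ℝ → ℝ}
    (hf : ∀ x ∈ D, HasDerivAt f (f' x) x) (hf' : ∀ x ∈ interior D, f' x ≤ 0) :
    AntitoneOn f D :=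
  antitoneOn_of_hasDerivWithinAt_nonpos hD (fun x hx ↦ (hf x hx).continuousAt.continuousWithinAt)
    (fun x hx ↦ (hf x (interior_subset hx)).hasDerivWithinAt) hf'

theorem strictMonoOn_of_hasDerivAt_pos {D : Set ℝ} (hD : Convex ℝ D) {f f' : ℝ → ℝ}
    (hf : ∀ x ∈ D, HasDerivAt f (f' x) x) (hf' : ∀ x ∈ interior D, 0 < f' x) :
    StrictMonoOn f D :=
  strictMonoOn_of_hasDerivWithinAt_pos hD (fun x hx ↦ (hf x hx).continuousAt.continuousWithinAt)
    (fun x hx ↦ (hf x (interior_subset hx)).hasDerivWithinAt) hf'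

theorem forall_pos_of_forall_Ico_pos {f : ℝ → ℝ} {a : ℝ} (hf : Continuous f)
    (hstep : ∀ b ≥ a, (∀ t ∈ Ico a b, 0 < f t) → 0 < f b) : ∀ z ≥ a, 0 < f z := by
  by_contra! ⟨w, haw, hw⟩
  let S := Ici a ∩ {t | f t ≤ 0}
  have hbdd : BddBelow S := ⟨a, fun t ht ↦ ht.1⟩
  have hmem : sInf S ∈ S :=
    (isClosed_Ici.inter (isClosed_le hf continuous_const)).csInf_mem ⟨w, haw, hw⟩ hbdd
  refine (hstep _ hmem.1 fun t ht ↦ ?_).not_ge hmem.2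
  by_contra! hft
  exact ht.2.not_ge (csInf_le hbdd ⟨ht.1, hft⟩)

theorem le_max_of_hasDerivAt_le_mul_sub {w w' : ℝ → ℝ} {k a A : ℝ} (hk : 0 ≤ k) (ha : 0 ≤ a)
    (hw : ∀ z ≥ a, HasDerivAt w (w' z) z) (hw' : ∀ z ≥ a, w' z ≤ k * z * (A - w z)) :
    ∀ z ≥ a, w z ≤ max A (w a) := by
  have hN : AntitoneOn (fun z ↦ exp (k * (z ^ 2 - a ^ 2) / 2) * (w z - A)) (Ici a) := by
    refine antitoneOn_of_hasDerivAt_nonpos (convex_Ici a)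
      (f' := fun z ↦ exp (k * (z ^ 2 - a ^ 2) / 2) * (k * z * (w z - A) + w' z))
      (fun z hz ↦ ?_) fun z hz ↦ ?_
    · refine (HasDerivAt.mul
        ((((hasDerivAt_pow 2 z).sub_const (a ^ 2)).const_mul k).div_const 2).exp
        ((hw z hz).sub_const A)).congr_deriv ?_
      push_cast
      ring
    · rw [interior_Ici] at hz
      have := hw' z hz.le
      exact mul_nonpos_of_nonneg_of_nonpos (exp_pos _).le (by linarith)
  intro z hz
  rcases le_or_gt (w z) A with hzA | hzA
  · exact le_max_of_le_left hzA
  have hweight : 1 ≤ exp (k * (z ^ 2 - a ^ 2) / 2) :=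
    one_le_exp (div_nonneg (mul_nonneg hk (by nlinarith)) zero_le_two)
  have := hN self_mem_Ici hz hz
  simp only [sub_self, mul_zero, zero_div, exp_zero, one_mul] at this
  exact le_max_of_le_right (by nlinarith)

theorem hasDerivAt_rpow_const_of_pos {p z : ℝ} (hz : 0 < z) :
    HasDerivAt (fun z ↦ z ^ p) (p * z ^ p / z) z := by
  simpa [rpow_sub_one hz.ne', mul_div_assoc] using hasDerivAt_rpow_const (p := p) (Or.inl hz.ne')

theorem hasDerivAt_exp_sq_div_four_mul {f : ℝ → ℝ} {f' z : ℝ} (hf : HasDerivAt f f' z) :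
    HasDerivAt (fun z ↦ exp (z ^ 2 / 4) * f z) (exp (z ^ 2 / 4) * (f' + z / 2 * f z)) z := by
  refine (HasDerivAt.mul ((hasDerivAt_pow 2 z).div_const 4).exp hf).congr_deriv ?_
  push_cast
  ring

noncomputable def twistedDeriv (Φ : ℝ → ℝ) (z : ℝ) : ℝ := deriv Φ z + z / 2 * Φ z

structure IsKummerProfile (γ : ℝ) (Φ : ℝ → ℝ) : Prop where
  differentiable : Differentiable ℝ Φ
  differentiable_deriv : Differentiable ℝ (deriv Φ)
  ode : ∀ z ≥ 0, deriv (deriv Φ) z + z / 2 * deriv Φ z + γ / 2 * Φ z = 0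
  deriv_zero : deriv Φ 0 = 0

namespace IsKummerProfile

variable {γ : ℝ} {Φ : ℝ → ℝ}

theorem hasDerivAt (hΦ : IsKummerProfile γ Φ) (z : ℝ) : HasDerivAt Φ (deriv Φ z) z :=
  (hΦ.differentiable z).hasDerivAt

theorem hasDerivAt_twistedDeriv (hΦ : IsKummerProfile γ Φ) {z : ℝ} (hz : 0 ≤ z) :
    HasDerivAt (twistedDeriv Φ) ((1 - γ) / 2 * Φ z) z := by
  refine ((hΦ.differentiable_deriv z).hasDerivAt.add
    (((hasDerivAt_id z).div_const 2).mul (hΦ.hasDerivAt z))).congr_deriv ?_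
  rw [id_eq]
  linear_combination hΦ.ode z hz

theorem hasDerivAt_exp_mul (hΦ : IsKummerProfile γ Φ) (z : ℝ) :
    HasDerivAt (fun z ↦ exp (z ^ 2 / 4) * Φ z) (exp (z ^ 2 / 4) * twistedDeriv Φ z) z :=
  hasDerivAt_exp_sq_div_four_mul (hΦ.hasDerivAt z)

theorem hasDerivAt_exp_mul_deriv (hΦ : IsKummerProfile γ Φ) {z : ℝ} (hz : 0 ≤ z) :
    HasDerivAt (fun z ↦ exp (z ^ 2 / 4) * deriv Φ z) (-(γ / 2) * (exp (z ^ 2 / 4) * Φ z)) z := by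
  refine (hasDerivAt_exp_sq_div_four_mul (hΦ.differentiable_deriv z).hasDerivAt).congr_deriv ?_
  linear_combination exp (z ^ 2 / 4) * hΦ.ode z hz

theorem twistedDeriv_zero (hΦ : IsKummerProfile γ Φ) : twistedDeriv Φ 0 = 0 := by
  simp [twistedDeriv, hΦ.deriv_zero]

theorem pos (hΦ : IsKummerProfile γ Φ) (hγ : γ ≤ 1) (h0 : 0 < Φ 0) : ∀ z ≥ 0, 0 < Φ z := by
  refine forall_pos_of_forall_Ico_pos hΦ.differentiable.continuous fun b hb hpos ↦ ?_
  have hmono : MonotoneOn (twistedDeriv Φ) (Icc 0 b) :=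
    monotoneOn_of_hasDerivAt_nonneg (convex_Icc 0 b)
      (fun z hz ↦ hΦ.hasDerivAt_twistedDeriv hz.1) fun z hz ↦ by
        rw [interior_Icc] at hz
        have := hpos z ⟨hz.1.le, hz.2⟩
        have : 0 ≤ 1 - γ := by linarith
        positivity
  have hE : MonotoneOn (fun z ↦ exp (z ^ 2 / 4) * Φ z) (Icc 0 b) :=
    monotoneOn_of_hasDerivAt_nonneg (convex_Icc 0 b) (fun z _ ↦ hΦ.hasDerivAt_exp_mul z)
      fun z hz ↦ by
        rw [interior_Icc] at hz
        have := hmono (left_mem_Icc.2 hb) (Ioo_subset_Icc_self hz) hz.1.le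
        rw [hΦ.twistedDeriv_zero] at this
        positivity
  have := hE (left_mem_Icc.2 hb) (right_mem_Icc.2 hb) hb
  exact pos_of_mul_pos_right (h0.trans_le (by simpa using this)) (exp_pos _).le

theorem deriv_nonpos (hΦ : IsKummerProfile γ Φ) (hγ : 0 ≤ γ) (hpos : ∀ z ≥ 0, 0 < Φ z) :
    ∀ z ≥ 0, deriv Φ z ≤ 0 := by
  have hanti : AntitoneOn (fun z ↦ exp (z ^ 2 / 4) * deriv Φ z) (Ici 0) :=
    antitoneOn_of_hasDerivAt_nonpos (convex_Ici 0) (fun z hz ↦ hΦ.hasDerivAt_exp_mul_deriv hz)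
      fun z hz ↦ mul_nonpos_of_nonpos_of_nonneg (by linarith)
        (mul_pos (exp_pos _) (hpos z (interior_subset hz))).le
  intro z hz
  have := hanti self_mem_Ici hz hz
  exact nonpos_of_mul_nonpos_right (by simpa [hΦ.deriv_zero] using this) (exp_pos _)

theorem antitoneOn (hΦ : IsKummerProfile γ Φ) (hderiv : ∀ z ≥ 0, deriv Φ z ≤ 0) :
    AntitoneOn Φ (Ici 0) :=
  antitoneOn_of_hasDerivAt_nonpos (convex_Ici 0) (fun z _ ↦ hΦ.hasDerivAt z)
    fun z hz ↦ hderiv z (interior_subset hz)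

theorem twistedDeriv_pos (hΦ : IsKummerProfile γ Φ) (hγ : γ < 1) (hpos : ∀ z ≥ 0, 0 < Φ z) :
    ∀ z > 0, 0 < twistedDeriv Φ z := by
  intro z hz
  have hmono : StrictMonoOn (twistedDeriv Φ) (Ici 0) :=
    strictMonoOn_of_hasDerivAt_pos (convex_Ici 0) (fun z hz ↦ hΦ.hasDerivAt_twistedDeriv hz)
      fun z hz ↦ by
        rw [interior_Ici] at hz
        have := hpos z hz.le
        have : 0 < 1 - γ := by linarith
        positivity
  simpa [hΦ.twistedDeriv_zero] using hmono self_mem_Ici hz.le hz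

theorem monotoneOn_twistedDeriv_mul_rpow (hΦ : IsKummerProfile γ Φ) (hγ : γ ≤ 1)
    (hderiv : ∀ z ≥ 0, deriv Φ z ≤ 0) :
    MonotoneOn (fun z ↦ twistedDeriv Φ z * z ^ γ / z) (Ioi 0) := by
  refine monotoneOn_of_hasDerivAt_nonneg (convex_Ioi 0)
    (f' := fun z ↦ (1 - γ) * z ^ γ * -deriv Φ z / z ^ 2) (fun z hz ↦ ?_) fun z hz ↦ ?_
  · have hz0 : z ≠ 0 := hz.ne'
    refine (((hΦ.hasDerivAt_twistedDeriv hz.le).mul (hasDerivAt_rpow_const_of_pos hz)).div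
      (hasDerivAt_id z) hz0).congr_deriv ?_
    simp only [twistedDeriv, id_eq, Pi.mul_apply]
    field_simp
    ring
  · rw [interior_Ioi] at hz
    have hΦ' : 0 ≤ -deriv Φ z := by linarith [hderiv z hz.le]
    exact div_nonneg (mul_nonneg (mul_nonneg (by linarith) (rpow_pos_of_pos hz γ).le) hΦ')
      (sq_nonneg z)

theorem lower_bound (hΦ : IsKummerProfile γ Φ) (hγ : γ ≤ 1) (hderiv : ∀ z ≥ 0, deriv Φ z ≤ 0) :
    ∀ z ≥ 1, 2 * twistedDeriv Φ 1 * z ^ (-γ) ≤ Φ z := by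
  intro z hz
  have hz0 : 0 < z := by linarith
  have hr := rpow_pos_of_pos hz0 γ
  have hL := hΦ.monotoneOn_twistedDeriv_mul_rpow hγ hderiv (mem_Ioi.2 one_pos) hz0 hz
  simp only [one_rpow, div_one, mul_one] at hL
  have hh : twistedDeriv Φ z * z ^ γ / z ≤ Φ z * z ^ γ / 2 := by
    have : twistedDeriv Φ z ≤ z / 2 * Φ z := by
      unfold twistedDeriv
      linarith [hderiv z hz0.le]
    rw [div_le_iff₀ hz0]
    nlinarith
  rw [rpow_neg hz0.le, ← div_eq_mul_inv, div_le_iff₀ hr]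
  linarith

theorem antitoneOn_twistedDeriv_mul_rpow_add (hΦ : IsKummerProfile γ Φ) (hγ : γ ≤ 1)
    (hpos : ∀ z ≥ 0, 0 < Φ z) :
    AntitoneOn (fun z ↦ twistedDeriv Φ z * z ^ γ / z + (1 - γ) * (Φ z * z ^ γ / z ^ 2))
      (Ioi 0) := by
  refine antitoneOn_of_hasDerivAt_nonpos (convex_Ioi 0)
    (f' := fun z ↦ (1 - γ) * (γ - 2) * (z ^ γ * Φ z) / z ^ 3) (fun z hz ↦ ?_) fun z hz ↦ ?_
  · have hz0 : z ≠ 0 := hz.ne'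
    refine ((((hΦ.hasDerivAt_twistedDeriv hz.le).mul (hasDerivAt_rpow_const_of_pos hz)).div
      (hasDerivAt_id z) hz0).add ((((hΦ.hasDerivAt z).mul (hasDerivAt_rpow_const_of_pos hz)).div
      (hasDerivAt_pow 2 z) (pow_ne_zero 2 hz0)).const_mul (1 - γ))).congr_deriv ?_
    simp only [twistedDeriv, id_eq, Pi.mul_apply]
    field_simp
    ring
  · rw [interior_Ioi] at hz
    have : (1 - γ) * (γ - 2) ≤ 0 := mul_nonpos_of_nonneg_of_nonpos (by linarith) (by linarith)
    exact div_nonpos_of_nonpos_of_nonneg (mul_nonpos_of_nonpos_of_nonneg this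
      (mul_pos (rpow_pos_of_pos hz γ) (hpos z hz.le)).le) (pow_pos hz 3).le

theorem twistedDeriv_mul_rpow_le (hΦ : IsKummerProfile γ Φ) (hγ : γ ≤ 1)
    (hpos : ∀ z ≥ 0, 0 < Φ z) :
    ∀ z ≥ 1, twistedDeriv Φ z * z ^ γ ≤ (twistedDeriv Φ 1 + (1 - γ) * Φ 1) * z := by
  intro z hz
  have hz0 : 0 < z := by linarith
  have hM := hΦ.antitoneOn_twistedDeriv_mul_rpow_add hγ hpos (mem_Ioi.2 one_pos) hz0 hz
  simp only [one_rpow, div_one, mul_one, one_pow] at hM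
  have : 0 ≤ (1 - γ) * (Φ z * z ^ γ / z ^ 2) := by
    have := hpos z hz0.le
    have : 0 ≤ 1 - γ := by linarith
    positivity
  rw [← div_le_iff₀ hz0]
  linarith

theorem upper_bound (hΦ : IsKummerProfile γ Φ) (hγ₀ : 0 ≤ γ) (hγ₁ : γ ≤ 1)
    (hpos : ∀ z ≥ 0, 0 < Φ z) (hderiv : ∀ z ≥ 0, deriv Φ z ≤ 0) :
    ∀ z ≥ 1, Φ z ≤ max (4 * (twistedDeriv Φ 1 + (1 - γ) * Φ 1)) (2 ^ γ * Φ 1) * z ^ (-γ) := by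
  set A := twistedDeriv Φ 1 + (1 - γ) * Φ 1
  have hanti := hΦ.antitoneOn hderiv
  have hcmp : ∀ z ≥ 2, z ^ γ * Φ z ≤ max (4 * A) (2 ^ γ * Φ 2) := by
    refine le_max_of_hasDerivAt_le_mul_sub (k := 1 / 4)
      (w' := fun z ↦ γ * z ^ γ / z * Φ z + z ^ γ * deriv Φ z) (by norm_num) zero_le_two
      (fun z hz ↦ (hasDerivAt_rpow_const_of_pos (by linarith)).mul (hΦ.hasDerivAt z))
      fun z hz ↦ ?_
    have hz0 : 0 < z := by linarith
    have hh := hΦ.twistedDeriv_mul_rpow_le hγ₁ hpos z (by linarith)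
    have hw := mul_pos (rpow_pos_of_pos hz0 γ) (hpos z hz0.le)
    have hγz : γ ≤ z ^ 2 / 4 := by nlinarith
    have : γ * z ^ γ / z * Φ z ≤ z / 4 * (z ^ γ * Φ z) := by
      rw [div_mul_eq_mul_div, div_le_iff₀ hz0, mul_assoc]
      nlinarith [mul_le_mul_of_nonneg_right hγz hw.le]
    have hΦ' : deriv Φ z = twistedDeriv Φ z - z / 2 * Φ z := by unfold twistedDeriv; ring
    rw [hΦ']
    linarith
  intro z hz
  have hz0 : 0 < z := by linarith
  rw [rpow_neg hz0.le, ← div_eq_mul_inv, le_div_iff₀ (rpow_pos_of_pos hz0 γ), mul_comm]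
  rcases le_total 2 z with h2 | h2
  · refine (hcmp z h2).trans (max_le_max le_rfl (mul_le_mul_of_nonneg_left ?_ (by positivity)))
    exact hanti (mem_Ici.2 zero_le_one) (mem_Ici.2 zero_le_two) one_le_two
  · exact le_max_of_le_right (mul_le_mul (rpow_le_rpow hz0.le h2 hγ₀)
      (hanti (mem_Ici.2 zero_le_one) (mem_Ici.2 hz0.le) hz) (hpos z hz0.le).le (by positivity))

end IsKummerProfile

/-- Let `γ ∈ (0,1)` and `Φ` solve `Φ'' + (z/2)Φ' + (γ/2)Φ = 0` with
`Φ(0)=1`, `Φ'(0)=0`. Then there are `c, C > 0` with `c z^(−γ) ≤ Φ(z) ≤ C z^(−γ)`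
for all `z ≥ 1`. -/
theorem stmt7 (γ : ℝ) (hγ : γ ∈ Set.Ioo (0 : ℝ) 1) (Φ : ℝ → ℝ)
    (hsmooth : ContDiff ℝ 2 Φ)
    (hode : ∀ z ≥ (0 : ℝ), deriv (deriv Φ) z + z / 2 * deriv Φ z + γ / 2 * Φ z = 0)
    (h0 : Φ 0 = 1) (h0' : deriv Φ 0 = 0) :
    ∃ c > (0 : ℝ), ∃ C > (0 : ℝ), ∀ z ≥ (1 : ℝ),
      c * z ^ (-γ) ≤ Φ z ∧ Φ z ≤ C * z ^ (-γ) := by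
  obtain ⟨hγ₀, hγ₁⟩ := hγ
  have hΦ : IsKummerProfile γ Φ := ⟨hsmooth.differentiable two_ne_zero,
    (hsmooth.deriv' (n := 1)).differentiable one_ne_zero, hode, h0'⟩
  have hpos := hΦ.pos hγ₁.le (h0 ▸ one_pos)
  have hderiv := hΦ.deriv_nonpos hγ₀.le hpos
  have hc := hΦ.twistedDeriv_pos hγ₁ hpos 1 one_pos
  refine ⟨2 * twistedDeriv Φ 1, by positivity, _,
    lt_max_of_lt_right (mul_pos (by positivity) (hpos 1 zero_le_one)),
    fun z hz ↦ ⟨hΦ.lower_bound hγ₁.le hderiv z hz, hΦ.upper_bound hγ₀.le hγ₁.le hpos hderiv z hz⟩⟩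
end

section
/- Let γ ∈ (0,1) and let Φ solve Φ''(z) + (z/2)Φ'(z) + (γ/2)Φ(z) = 0 with Φ(0)=1, Φ'(0)=0. Then there exists C > 0 such that |Φ''(z)| ≤ C·z^(−γ−2) for all z ≥ 1. -/
/-!
Differentiating the equation `f'' + (z/2) f' + (β/2) f = 0` shows that `f'` solves it with
`β + 1` in place of `β`, so `Φ''` solves it with `β = γ + 2`. For any solution, with
`P = β f + z f'`, the energy `z^(2β) (P² + β(β+1) f²)` has derivative `z^(2β-1) (4β+2-z²) P²`,
hence is nonincreasing once `z² ≥ 4β+2`; this bounds `z^β f` for large `z`, and compactness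
bounds it on the remaining interval.
-/

open Set

/-- `f'` stands for the derivative of `f`. This is the profile equation of the self-similar
solutions `t^(-β/2) f (x / √t)` of the heat equation. -/
def IsHeatProfile (β : ℝ) (f f' : ℝ → ℝ) : Prop :=
  ∀ z > 0, HasDerivAt f (f' z) z ∧ HasDerivAt f' (-(z / 2 * f' z + β / 2 * f z)) z

noncomputable def decayEnergy (β : ℝ) (f f' : ℝ → ℝ) (z : ℝ) : ℝ :=
  (z ^ β * (β * f z + z * f' z)) ^ 2 + β * (β + 1) * (z ^ β * f z) ^ 2

namespace IsHeatProfile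

variable {β : ℝ} {f f' : ℝ → ℝ}

theorem deriv (h : IsHeatProfile β f f') :
    IsHeatProfile (β + 1) f' (fun z ↦ -(z / 2 * f' z + β / 2 * f z)) := by
  intro z hz
  obtain ⟨hf, hf'⟩ := h z hz
  refine ⟨hf', ((((hasDerivAt_id z).div_const 2).mul hf').add
    (hf.const_mul (β / 2))).neg.congr_deriv ?_⟩
  simp only [id]
  ring

theorem hasDerivAt_decayEnergy (h : IsHeatProfile β f f') {z : ℝ} (hz : 0 < z) :
    HasDerivAt (decayEnergy β f f')
      ((z ^ β * (β * f z + z * f' z)) ^ 2 * ((4 * β + 2 - z ^ 2) / z)) z := by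
  obtain ⟨hf, hf'⟩ := h z hz
  have hw : HasDerivAt (fun x : ℝ ↦ x ^ β) (β * z ^ β / z) z := by
    convert Real.hasDerivAt_rpow_const (p := β) (Or.inl hz.ne') using 1
    rw [Real.rpow_sub_one hz.ne']
    ring
  have hP := (hf.const_mul β).add ((hasDerivAt_id z).mul hf')
  have := ((hw.mul hP).pow 2).add (((hw.mul hf).pow 2).const_mul (β * (β + 1)))
  refine this.congr_deriv ?_
  simp only [Pi.mul_apply, Pi.add_apply, id]
  field_simp
  ring

theorem antitoneOn_decayEnergy (h : IsHeatProfile β f f') {R : ℝ} (hR : 0 < R)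
    (hRβ : 4 * β + 2 ≤ R ^ 2) : AntitoneOn (decayEnergy β f f') (Ici R) := by
  have hderiv : ∀ z ∈ Ici R, HasDerivAt (decayEnergy β f f')
      ((z ^ β * (β * f z + z * f' z)) ^ 2 * ((4 * β + 2 - z ^ 2) / z)) z :=
    fun z hz ↦ h.hasDerivAt_decayEnergy (hR.trans_le hz)
  refine antitoneOn_of_hasDerivWithinAt_nonpos (convex_Ici R)
    (fun z hz ↦ (hderiv z hz).continuousAt.continuousWithinAt)
    (fun z hz ↦ (hderiv z (interior_subset hz)).hasDerivWithinAt) fun z hz ↦ ?_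
  rw [interior_Ici] at hz
  have hz0 : 0 < z := hR.trans hz
  refine mul_nonpos_of_nonneg_of_nonpos (sq_nonneg _) (div_nonpos_of_nonpos_of_nonneg ?_ hz0.le)
  nlinarith [mem_Ioi.mp hz]

theorem exists_abs_rpow_mul_le (h : IsHeatProfile β f f') (hβ : 0 < β) :
    ∃ C, ∀ z ≥ 1, |z ^ β * f z| ≤ C := by
  set R := 4 * β + 2
  have hR : 1 ≤ R := by linarith
  have hcont : ContinuousOn (fun z ↦ z ^ β * f z) (Icc 1 R) := fun z hz ↦
    have hz0 : 0 < z := zero_lt_one.trans_le hz.1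
    ((Real.continuousAt_rpow_const z β (Or.inl hz0.ne')).mul
      (h z hz0).1.continuousAt).continuousWithinAt
  obtain ⟨M, hM⟩ := isCompact_Icc.exists_bound_of_continuousOn hcont
  have hββ : 0 < β * (β + 1) := by positivity
  refine ⟨max M √(decayEnergy β f f' R / (β * (β + 1))), fun z hz ↦ ?_⟩
  rcases le_total z R with hzR | hRz
  · exact (hM z ⟨hz, hzR⟩).trans (le_max_left _ _)
  · refine le_max_of_le_right (Real.abs_le_sqrt ?_)
    rw [le_div_iff₀ hββ]
    calc (z ^ β * f z) ^ 2 * (β * (β + 1)) ≤ decayEnergy β f f' z := by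
          unfold decayEnergy; nlinarith [sq_nonneg (z ^ β * (β * f z + z * f' z))]
      _ ≤ decayEnergy β f f' R :=
          h.antitoneOn_decayEnergy (by linarith) (by nlinarith) self_mem_Ici hRz hRz

theorem exists_abs_le_mul_rpow_neg (h : IsHeatProfile β f f') (hβ : 0 < β) :
    ∃ C > 0, ∀ z ≥ 1, |f z| ≤ C * z ^ (-β) := by
  obtain ⟨C, hC⟩ := h.exists_abs_rpow_mul_le hβ
  refine ⟨max C 1, by positivity, fun z hz ↦ ?_⟩
  have hz0 : 0 < z := zero_lt_one.trans_le hz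
  have hzβ : 0 < z ^ β := Real.rpow_pos_of_pos hz0 β
  rw [Real.rpow_neg hz0.le, ← div_eq_mul_inv, le_div_iff₀ hzβ]
  calc |f z| * z ^ β = |z ^ β * f z| := by rw [abs_mul, abs_of_pos hzβ, mul_comm]
    _ ≤ max C 1 := (hC z hz).trans (le_max_left _ _)

end IsHeatProfile

theorem isHeatProfile_of_ode {γ : ℝ} {Φ : ℝ → ℝ} (hΦ : ContDiff ℝ 2 Φ)
    (hode : ∀ z ≥ (0 : ℝ), deriv (deriv Φ) z + z / 2 * deriv Φ z + γ / 2 * Φ z = 0) :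
    IsHeatProfile γ Φ (deriv Φ) := by
  have hΦ' : ContDiff ℝ 1 (deriv Φ) := hΦ.deriv'
  intro z hz
  refine ⟨(hΦ.differentiable (by norm_num) z).hasDerivAt, ?_⟩
  refine ((hΦ'.differentiable one_ne_zero) z).hasDerivAt.congr_deriv ?_
  linarith [hode z hz.le]

theorem stmt9_general (γ : ℝ) (hγ : γ ∈ Set.Ioo (0 : ℝ) 1) (Φ : ℝ → ℝ)
    (hsmooth : ContDiff ℝ 2 Φ)
    (hode : ∀ z ≥ (0 : ℝ), deriv (deriv Φ) z + z / 2 * deriv Φ z + γ / 2 * Φ z = 0) :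
    ∃ C > (0 : ℝ), ∀ z ≥ (1 : ℝ), |deriv (deriv Φ) z| ≤ C * z ^ (-γ - 2) := by
  obtain ⟨C, hC, hbound⟩ := (isHeatProfile_of_ode hsmooth hode).deriv.deriv
    |>.exists_abs_le_mul_rpow_neg (by linarith [hγ.1])
  refine ⟨C, hC, fun z hz ↦ ?_⟩
  have hΦ'' : deriv (deriv Φ) z = -(z / 2 * deriv Φ z + γ / 2 * Φ z) := by
    linarith [hode z (by linarith)]
  rw [hΦ'', show -γ - 2 = -(γ + 1 + 1) by ring]
  exact hbound z hz

/-- Let `γ ∈ (0,1)` and `Φ` solve `Φ'' + (z/2)Φ' + (γ/2)Φ = 0` with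
`Φ(0)=1`, `Φ'(0)=0`. Then there is `C > 0` with `|Φ''(z)| ≤ C z^(−γ−2)` for `z ≥ 1`. -/
theorem stmt9 (γ : ℝ) (hγ : γ ∈ Set.Ioo (0 : ℝ) 1) (Φ : ℝ → ℝ)
    (hsmooth : ContDiff ℝ 2 Φ)
    (hode : ∀ z ≥ (0 : ℝ), deriv (deriv Φ) z + z / 2 * deriv Φ z + γ / 2 * Φ z = 0)
    (h0 : Φ 0 = 1) (h0' : deriv Φ 0 = 0) :
    ∃ C > (0 : ℝ), ∀ z ≥ (1 : ℝ), |deriv (deriv Φ) z| ≤ C * z ^ (-γ - 2) :=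
  stmt9_general γ hγ Φ hsmooth hode
end

section
/- Let γ ∈ (0,1), n ≥ 3, and let Φ solve Φ'' + (z/2)Φ' + (γ/2)Φ = 0 with Φ(0)=1, Φ'(0)=0. Suppose there exist z₀ > 0, c₁ > 0, c₂ > 0 with Φ''(z) ≤ 0 for z ∈ [0,z₀], Φ'(z) ≤ −c₁ z^(−γ−1) for z > z₀, and Φ''(z) ≤ c₂ z^(−γ−2) for z > z₀. Then for every t₀ ≥ (c₂/((n−2)c₁ z₀))², every ξ₀ > 0 and A > 0, the function χ(ξ,t) := A(t+t₀)^(−γ/2) Φ((ξ+ξ₀)(t+t₀)^(−1/2)) satisfies χ_{ξξ}(ξ,t) + (n−2)·χ_ξ(ξ,t) ≤ 0 for all ξ > 0 and t > 0. -/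
/-!
Write `s = (t + t₀)^(-1/2)` and `z = (ξ + ξ₀) s`. By the chain rule
`χ_ξξ + (n - 2) χ_ξ = A (t + t₀)^(-γ/2) s (s Φ''(z) + (n - 2) Φ'(z))`, so it suffices that the
bracket is nonpositive. On `[0, z₀]` both `Φ''` and `Φ'` are nonpositive (`Φ` is nonincreasing).
For `z > z₀` the decay bounds give `s Φ'' + (n - 2) Φ' ≤ z^(-γ-2) (s c₂ - (n - 2) c₁ z)`, and the
lower bound on `t₀` makes `s c₂ ≤ (n - 2) c₁ z₀ < (n - 2) c₁ z`.
-/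

open Real Set

lemma deriv_const_mul_comp_add_mul {f : ℝ → ℝ} (hf : Differentiable ℝ f) (C b s : ℝ) :
    deriv (fun x => C * f ((x + b) * s)) = fun x => C * s * deriv f ((x + b) * s) := by
  funext x
  have hinner : HasDerivAt (fun x : ℝ => (x + b) * s) s x := by
    simpa using ((hasDerivAt_id x).add_const b).mul_const s
  have h : HasDerivAt (fun x => C * f ((x + b) * s)) (C * (deriv f ((x + b) * s) * s)) x :=
    ((hf _).hasDerivAt.comp x hinner).const_mul C
  rw [h.deriv]
  ring

lemma AntitoneOn.deriv_nonpos_of_pos {f : ℝ → ℝ} (hf : AntitoneOn f (Ici 0)) {z : ℝ}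
    (hz : 0 < z) : deriv f z ≤ 0 := by
  rw [← derivWithin_of_mem_nhds (Ici_mem_nhds hz)]
  exact hf.derivWithin_nonpos

lemma rpow_neg_half_mul_le {t₀ c K : ℝ} (hK : 0 < K) (ht₀ : (c / K) ^ 2 ≤ t₀) {t : ℝ}
    (ht : 0 < t) : (t + t₀) ^ (-(1 : ℝ) / 2) * c ≤ K := by
  have hpos : 0 < t + t₀ := by nlinarith [sq_nonneg (c / K)]
  have hc : c ≤ K * √(t + t₀) := by
    have := (le_sqrt_of_sq_le ht₀).trans (sqrt_le_sqrt (by linarith : t₀ ≤ t + t₀))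
    rwa [div_le_iff₀' hK] at this
  have hinv : (t + t₀) ^ (-(1 : ℝ) / 2) * √(t + t₀) = 1 := by
    rw [sqrt_eq_rpow, ← rpow_add hpos]
    norm_num
  calc (t + t₀) ^ (-(1 : ℝ) / 2) * c ≤ (t + t₀) ^ (-(1 : ℝ) / 2) * (K * √(t + t₀)) :=
        mul_le_mul_of_nonneg_left hc (rpow_nonneg hpos.le _)
    _ = K := by rw [mul_left_comm, hinv, mul_one]

lemma mul_deriv_deriv_add_mul_deriv_nonpos_of_gt {Φ : ℝ → ℝ} {γ z₀ c₁ c₂ k s z : ℝ}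
    (hPhi' : ∀ z > z₀, deriv Φ z ≤ -c₁ * z ^ (-γ - 1))
    (hPhi''2 : ∀ z > z₀, deriv (deriv Φ) z ≤ c₂ * z ^ (-γ - 2))
    (hk : 0 ≤ k) (hs : 0 ≤ s) (hzpos : 0 < z) (hz : z₀ < z) (hsc : s * c₂ ≤ k * c₁ * z) :
    s * deriv (deriv Φ) z + k * deriv Φ z ≤ 0 := by
  have hpow : z ^ (-γ - 1) = z ^ (-γ - 2) * z := by
    rw [← rpow_add_one hzpos.ne']
    ring_nf
  calc s * deriv (deriv Φ) z + k * deriv Φ z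
        ≤ s * (c₂ * z ^ (-γ - 2)) + k * (-c₁ * z ^ (-γ - 1)) :=
          add_le_add (mul_le_mul_of_nonneg_left (hPhi''2 z hz) hs)
            (mul_le_mul_of_nonneg_left (hPhi' z hz) hk)
    _ = z ^ (-γ - 2) * (s * c₂ - k * c₁ * z) := by rw [hpow]; ring
    _ ≤ 0 := mul_nonpos_of_nonneg_of_nonpos (rpow_nonneg hzpos.le _) (by linarith)

lemma mul_deriv_deriv_add_mul_deriv_nonpos {Φ : ℝ → ℝ} {γ z₀ c₁ c₂ k s z : ℝ}
    (hmono : AntitoneOn Φ (Ici 0))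
    (hPhi'' : ∀ z ∈ Icc 0 z₀, deriv (deriv Φ) z ≤ 0)
    (hPhi' : ∀ z > z₀, deriv Φ z ≤ -c₁ * z ^ (-γ - 1))
    (hPhi''2 : ∀ z > z₀, deriv (deriv Φ) z ≤ c₂ * z ^ (-γ - 2))
    (hk : 0 ≤ k) (hc₁ : 0 ≤ c₁) (hs : 0 ≤ s) (hsc : s * c₂ ≤ k * c₁ * z₀) (hz : 0 < z) :
    s * deriv (deriv Φ) z + k * deriv Φ z ≤ 0 := by
  rcases le_or_gt z z₀ with hle | hgt
  · exact add_nonpos (mul_nonpos_of_nonneg_of_nonpos hs (hPhi'' z ⟨hz.le, hle⟩))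
      (mul_nonpos_of_nonneg_of_nonpos hk (hmono.deriv_nonpos_of_pos hz))
  · refine mul_deriv_deriv_add_mul_deriv_nonpos_of_gt hPhi' hPhi''2 hk hs hz hgt ?_
    exact hsc.trans (mul_le_mul_of_nonneg_left hgt.le (mul_nonneg hk hc₁))

theorem stmt13_general (γ : ℝ) (n : ℕ) (hn : 3 ≤ n)
    (Φ : ℝ → ℝ) (hsmooth : ContDiff ℝ 2 Φ)
    (hmono : AntitoneOn Φ (Set.Ici (0 : ℝ)))
    (z₀ c₁ c₂ : ℝ) (hz₀ : 0 < z₀) (hc₁ : 0 < c₁)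
    (hPhi'' : ∀ z ∈ Set.Icc (0 : ℝ) z₀, deriv (deriv Φ) z ≤ 0)
    (hPhi' : ∀ z > z₀, deriv Φ z ≤ -c₁ * z ^ (-γ - 1))
    (hPhi''2 : ∀ z > z₀, deriv (deriv Φ) z ≤ c₂ * z ^ (-γ - 2))
    (t₀ : ℝ) (ht₀ : (c₂ / (((n : ℝ) - 2) * c₁ * z₀)) ^ 2 ≤ t₀)
    (ξ₀ A : ℝ) (hξ₀ : 0 < ξ₀) (hA : 0 < A)
    (χ : ℝ → ℝ → ℝ)
    (hχ : ∀ ξ t : ℝ, χ ξ t =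
      A * (t + t₀) ^ (-(γ / 2)) * Φ ((ξ + ξ₀) * (t + t₀) ^ (-(1 : ℝ) / 2))) :
    ∀ ξ > (0 : ℝ), ∀ t > (0 : ℝ),
      deriv (deriv (fun x => χ x t)) ξ + ((n : ℝ) - 2) * deriv (fun x => χ x t) ξ ≤ 0 := by
  intro ξ hξ t ht
  have hk : (0 : ℝ) < (n : ℝ) - 2 := by
    have : (3 : ℝ) ≤ n := by exact_mod_cast hn
    linarith
  have htt : 0 < t + t₀ := by nlinarith [sq_nonneg (c₂ / (((n : ℝ) - 2) * c₁ * z₀))]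
  set s := (t + t₀) ^ (-(1 : ℝ) / 2)
  set C := A * (t + t₀) ^ (-(γ / 2))
  have hs : 0 < s := rpow_pos_of_pos htt _
  have hχt : (fun x => χ x t) = fun x => C * Φ ((x + ξ₀) * s) := funext (hχ · t)
  rw [hχt, deriv_const_mul_comp_add_mul (hsmooth.differentiable two_ne_zero),
    deriv_const_mul_comp_add_mul hsmooth.differentiable_deriv_two]
  set z := (ξ + ξ₀) * s
  have hsc : s * c₂ ≤ ((n : ℝ) - 2) * c₁ * z₀ := rpow_neg_half_mul_le (by positivity) ht₀ ht
  have key := mul_deriv_deriv_add_mul_deriv_nonpos hmono hPhi'' hPhi' hPhi''2 hk.le hc₁.le hs.le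
    hsc (mul_pos (by linarith) hs : 0 < z)
  calc C * s * s * deriv (deriv Φ) z + ((n : ℝ) - 2) * (C * s * deriv Φ z)
      = C * s * (s * deriv (deriv Φ) z + ((n : ℝ) - 2) * deriv Φ z) := by ring
    _ ≤ 0 := mul_nonpos_of_nonneg_of_nonpos (by positivity) key

/-- Under the stated sign and decay hypotheses on `Φ`, for every
`t₀ ≥ (c₂/((n−2)c₁z₀))²` with `t₀ ≥ 1`, every `ξ₀ > 0` and `A > 0`, the function
`χ(ξ,t) = A(t+t₀)^(−γ/2) Φ((ξ+ξ₀)(t+t₀)^(−1/2))` satisfies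
`χ_{ξξ} + (n−2)χ_ξ ≤ 0` for all `ξ > 0`, `t > 0`. -/
theorem stmt13 (γ : ℝ) (hγ : γ ∈ Set.Ioo (0 : ℝ) 1) (n : ℕ) (hn : 3 ≤ n)
    (Φ : ℝ → ℝ) (hsmooth : ContDiff ℝ 2 Φ)
    (hode : ∀ z ≥ (0 : ℝ), deriv (deriv Φ) z + z / 2 * deriv Φ z + γ / 2 * Φ z = 0)
    (h0 : Φ 0 = 1) (h0' : deriv Φ 0 = 0)
    (hmono : AntitoneOn Φ (Set.Ici (0 : ℝ)))
    (z₀ c₁ c₂ : ℝ) (hz₀ : 0 < z₀) (hc₁ : 0 < c₁) (hc₂ : 0 < c₂)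
    (hPhi'' : ∀ z ∈ Set.Icc (0 : ℝ) z₀, deriv (deriv Φ) z ≤ 0)
    (hPhi' : ∀ z > z₀, deriv Φ z ≤ -c₁ * z ^ (-γ - 1))
    (hPhi''2 : ∀ z > z₀, deriv (deriv Φ) z ≤ c₂ * z ^ (-γ - 2))
    (t₀ : ℝ) (ht₀ : (c₂ / (((n : ℝ) - 2) * c₁ * z₀)) ^ 2 ≤ t₀) (ht₀1 : 1 ≤ t₀)
    (ξ₀ A : ℝ) (hξ₀ : 0 < ξ₀) (hA : 0 < A)
    (χ : ℝ → ℝ → ℝ)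
    (hχ : ∀ ξ t : ℝ, χ ξ t =
      A * (t + t₀) ^ (-(γ / 2)) * Φ ((ξ + ξ₀) * (t + t₀) ^ (-(1 : ℝ) / 2))) :
    ∀ ξ > (0 : ℝ), ∀ t > (0 : ℝ),
      deriv (deriv (fun x => χ x t)) ξ + ((n : ℝ) - 2) * deriv (fun x => χ x t) ξ ≤ 0 :=
  stmt13_general γ n hn Φ hsmooth hmono z₀ c₁ c₂ hz₀ hc₁ hPhi'' hPhi' hPhi''2 t₀ ht₀ ξ₀ A hξ₀ hA χ
    hχ
end

section
/- Let n ≥ 3, D > 0, γ > 0 and a ∈ (0,1). Then there exists ξ₀ > 1 such that the function χ̂(ξ,t) := a(t+1)^(−γ/2)·(1 + (ξ−ξ₀)²/(4(t+1)))^(−γ/2) satisfies, for all ξ > ξ₀ and t > 0, the differential inequality χ̂_t − χ̂_{ξξ} − e^(−2ξ)·{ (D+χ̂)(χ̂_{ξξ} + (n−2)χ̂_ξ) − ((n−2)/2)·χ̂_ξ² } ≤ 0. -/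
/-!
With `s = ξ - ξ₀` and `u = t + 1 + s²/4` we have `χ̂ = a u^p`, `p = -γ/2`, and every term of
`Q χ̂` is `a u^p / u` times a polynomial in `p`, `s`, `σ = s²/(4u) ∈ [0, 1]` and `a u^p ∈ (0, 1]`.
The heat part `χ̂_t - χ̂_ξξ` contributes at most `p/2 < 0`, while the part multiplied by
`e^{-2ξ}` is at most `-p/2 · e^{-2ξ} ((D + 1)(1 + (n - 2)s) - (n - 2)p)`. Since
`e^{-2s}(1 + (n - 2)s) ≤ n - 1`, this is at most a constant times `e^{-2ξ₀}`, which a large `ξ₀`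
makes smaller than `-p/2`.
-/

open Real Filter Topology

/-- `Q` evaluated on the values of `v, v_t, v_ξ, v_ξξ` at a point; `k = n - 2`, `E = e^{-2ξ}`. -/
noncomputable def fastDiffOp (D k E v vt vx vxx : ℝ) : ℝ :=
  vt - vxx - E * ((D + v) * (vxx + k * vx) - k / 2 * vx ^ 2)

lemma exp_neg_mul_one_add_mul_le {k s : ℝ} (hk : 0 ≤ k) (hs : 0 ≤ s) :
    exp (-s) * (1 + k * s) ≤ 1 + k := by
  have h : 1 + k * s ≤ (1 + k) * exp s := by
    nlinarith [add_one_le_exp s, mul_nonneg hk hs]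
  calc exp (-s) * (1 + k * s) ≤ exp (-s) * ((1 + k) * exp s) := by gcongr
    _ = 1 + k := by rw [mul_left_comm, ← exp_add, neg_add_cancel, exp_zero, mul_one]

lemma exp_neg_two_mul_mul_affine_le {A B k ξ₀ ξ : ℝ} (hA : 0 ≤ A) (hB : 0 ≤ B) (hk : 0 ≤ k)
    (hξ : ξ₀ ≤ ξ) :
    exp (-2 * ξ) * (A * (1 + k * (ξ - ξ₀)) + B) ≤ exp (-2 * ξ₀) * (A * (1 + k) + B) := by
  obtain ⟨s, hs, rfl⟩ : ∃ s, 0 ≤ s ∧ ξ = ξ₀ + s := ⟨ξ - ξ₀, by linarith, by ring⟩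
  rw [add_sub_cancel_left]
  have hsplit : exp (-2 * (ξ₀ + s)) = exp (-2 * ξ₀) * exp (-(2 * s)) := by
    rw [← exp_add]; ring_nf
  have h1 : exp (-(2 * s)) * (1 + k * s) ≤ 1 + k := by
    refine le_trans ?_ (exp_neg_mul_one_add_mul_le hk (by positivity : 0 ≤ 2 * s))
    gcongr; nlinarith [mul_nonneg hk hs]
  have h2 : exp (-(2 * s)) ≤ 1 := exp_le_one_iff.mpr (by linarith)
  rw [hsplit, mul_assoc]
  gcongr
  nlinarith [mul_le_mul_of_nonneg_left h1 hA, mul_le_mul_of_nonneg_right h2 hB]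

lemma eventually_exp_neg_two_mul_le (M : ℝ) : ∀ᶠ x in atTop, exp (-2 * x) * M ≤ 1 := by
  have h : Tendsto (fun x : ℝ => exp (-2 * x) * M) atTop (𝓝 0) := by
    have hlin : Tendsto (fun x : ℝ => -2 * x) atTop atBot :=
      tendsto_id.const_mul_atTop_of_neg (by norm_num)
    simpa using (tendsto_exp_atBot.comp hlin).mul_const M
  exact h.eventually (eventually_le_nhds one_pos)

lemma mul_rpow_one_add_div {b q : ℝ} (hb : 0 < b) (hq : 0 ≤ q) (p : ℝ) :
    b ^ p * (1 + q / (4 * b)) ^ p = (b + q / 4) ^ p := by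
  rw [← mul_rpow hb.le (by positivity)]
  congr 1
  field_simp

section ShiftedSquare

variable {c : ℝ} (x₀ p : ℝ)

lemma hasDerivAt_add_sub_sq_div_four (x : ℝ) :
    HasDerivAt (fun y => c + (y - x₀) ^ 2 / 4) ((x - x₀) / 2) x := by
  refine ((((hasDerivAt_id' x).sub_const x₀).fun_pow 2).div_const 4).const_add c |>.congr_deriv ?_
  norm_num
  ring

lemma deriv_rpow_add_sub_sq_div_four (hc : 0 < c) :
    deriv (fun y => (c + (y - x₀) ^ 2 / 4) ^ p)
      = fun x => (x - x₀) / 2 * p * (c + (x - x₀) ^ 2 / 4) ^ (p - 1) := by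
  funext x
  exact ((hasDerivAt_add_sub_sq_div_four x₀ x).rpow_const (Or.inl (by positivity))).deriv

lemma deriv_deriv_rpow_add_sub_sq_div_four (hc : 0 < c) (x : ℝ) :
    deriv (deriv (fun y => (c + (y - x₀) ^ 2 / 4) ^ p)) x
      = p * ((p - 1) * (c + (x - x₀) ^ 2 / 4) ^ (p - 2) * ((x - x₀) / 2) ^ 2
          + (c + (x - x₀) ^ 2 / 4) ^ (p - 1) / 2) := by
  rw [deriv_rpow_add_sub_sq_div_four x₀ p hc]
  have hlin : HasDerivAt (fun y : ℝ => (y - x₀) / 2 * p) (1 / 2 * p) x :=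
    (((hasDerivAt_id x).sub_const x₀).div_const 2).mul_const p
  have hpow := (hasDerivAt_add_sub_sq_div_four (c := c) x₀ x).rpow_const (p := p - 1)
    (Or.inl (by positivity))
  have h : HasDerivAt (fun y => (y - x₀) / 2 * p * (c + (y - x₀) ^ 2 / 4) ^ (p - 1)) _ x :=
    hlin.mul hpow
  rw [h.deriv, show p - 1 - 1 = p - 2 by ring]
  ring

end ShiftedSquare

lemma fastDiffOp_rpow_profile_nonpos {D k p a c u s : ℝ} (hD : 0 ≤ D) (hk : 0 ≤ k)
    (hp : p ≤ 0) (ha : 0 ≤ a) (ha1 : a ≤ 1) (hc : 0 ≤ c) (hu : 1 ≤ u) (hs : 0 ≤ s)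
    (hsu : s ^ 2 ≤ 4 * u) (hsmall : c * ((D + 1) * (1 + k * s) - k * p) ≤ 1) :
    fastDiffOp D k c (a * u ^ p) (a * (p * u ^ (p - 1))) (a * ((s / 2) * p * u ^ (p - 1)))
      (a * (p * ((p - 1) * u ^ (p - 2) * (s / 2) ^ 2 + u ^ (p - 1) / 2))) ≤ 0 := by
  have hu0 : 0 < u := by linarith
  set w := u ^ p
  have hw0 : 0 < w := rpow_pos_of_pos hu0 p
  have hw1 : w ≤ 1 := rpow_le_one_of_one_le_of_nonpos hu hp
  rw [rpow_sub_one hu0.ne', rpow_sub hu0, rpow_two]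
  set v := a * w
  set σ := s ^ 2 / (4 * u)
  have hσ0 : 0 ≤ σ := by positivity
  have hσ1 : σ ≤ 1 := (div_le_one (by positivity)).mpr hsu
  have hv0 : 0 ≤ v := by positivity
  have hv1 : v ≤ 1 := by nlinarith
  set R := p / 2 - p * (p - 1) * σ
    - c * ((D + v) * (p * (p - 1) * σ + p / 2 * (1 + k * s)) - k / 2 * p ^ 2 * v * σ)
  have hfactor : fastDiffOp D k c v (a * (p * (w / u))) (a * ((s / 2) * p * (w / u)))
      (a * (p * ((p - 1) * (w / u ^ 2) * (s / 2) ^ 2 + w / u / 2))) = v / u * R := by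
    simp only [fastDiffOp, R, σ, v]
    field_simp
    ring
  rw [hfactor]
  refine mul_nonpos_of_nonneg_of_nonpos (by positivity) ?_
  have hpp : 0 ≤ p * (p - 1) * σ := mul_nonneg (mul_nonneg_of_nonpos_of_nonpos hp (by linarith)) hσ0
  have hDv : -(p / 2) * (D + v) * (c * (1 + k * s)) ≤ -(p / 2) * (D + 1) * (c * (1 + k * s)) := by
    gcongr
    linarith
  have hvσ : c * (k / 2 * p ^ 2) * (v * σ) ≤ c * (k / 2 * p ^ 2) := by
    apply mul_le_of_le_one_right (by positivity)
    nlinarith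
  have hgap : 0 ≤ -(p / 2) * (1 - c * ((D + 1) * (1 + k * s) - k * p)) :=
    mul_nonneg (by linarith) (by linarith)
  simp only [R]
  linarith [mul_nonneg (mul_nonneg hc (by linarith : 0 ≤ D + v)) hpp]

/-- Let `n ≥ 3`, `D > 0`, `γ > 0`, `a ∈ (0,1)`. Then there exists
`ξ₀ > 1` such that `χ̂(ξ,t) = a(t+1)^(−γ/2)(1 + (ξ−ξ₀)²/(4(t+1)))^(−γ/2)` satisfies
`χ̂_t − χ̂_{ξξ} − e^(−2ξ){(D+χ̂)(χ̂_{ξξ} + (n−2)χ̂_ξ) − ((n−2)/2)χ̂_ξ²} ≤ 0`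
for all `ξ > ξ₀`, `t > 0`. -/
theorem stmt15 (n : ℕ) (hn : 3 ≤ n) (D γ a : ℝ) (hD : 0 < D) (hγ : 0 < γ)
    (ha : a ∈ Set.Ioo (0 : ℝ) 1) :
    ∃ ξ₀ > (1 : ℝ), ∀ χ : ℝ → ℝ → ℝ,
      (∀ ξ t : ℝ, χ ξ t =
        a * (t + 1) ^ (-(γ / 2)) * (1 + (ξ - ξ₀) ^ 2 / (4 * (t + 1))) ^ (-(γ / 2))) →
      ∀ ξ > ξ₀, ∀ t > (0 : ℝ),
        deriv (fun s => χ ξ s) t - deriv (deriv (fun x => χ x t)) ξ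
          - Real.exp (-2 * ξ) *
            ((D + χ ξ t) *
                (deriv (deriv (fun x => χ x t)) ξ + ((n : ℝ) - 2) * deriv (fun x => χ x t) ξ)
              - ((n : ℝ) - 2) / 2 * (deriv (fun x => χ x t) ξ) ^ 2) ≤ 0 := by
  set p := -(γ / 2)
  set k := (n : ℝ) - 2
  have hk : 0 ≤ k := by simp only [k]; linarith [show (3 : ℝ) ≤ n by exact_mod_cast hn]
  have hp : p ≤ 0 := by simp only [p]; linarith
  obtain ⟨ξ₀, hξ₀1, hξ₀⟩ := ((eventually_gt_atTop 1).and
    (eventually_exp_neg_two_mul_le ((D + 1) * (1 + k) + -k * p))).exists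
  refine ⟨ξ₀, hξ₀1, fun χ hχ ξ hξ t ht => ?_⟩
  have hprofile : ∀ x, ∀ s > -1, χ x s = a * (s + 1 + (x - ξ₀) ^ 2 / 4) ^ p := fun x s hs => by
    rw [hχ, mul_assoc, mul_rpow_one_add_div (by linarith) (sq_nonneg _)]
  set u := t + 1 + (ξ - ξ₀) ^ 2 / 4
  have hu : 1 ≤ u := by simp only [u]; nlinarith [sq_nonneg (ξ - ξ₀)]
  have hdt : deriv (fun s => χ ξ s) t = a * (p * u ^ (p - 1)) := by
    have hev : (fun s => χ ξ s) =ᶠ[𝓝 t] fun s => a * (s + 1 + (ξ - ξ₀) ^ 2 / 4) ^ p :=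
      (eventually_gt_nhds (by linarith : -1 < t)).mono fun s hs => hprofile ξ s hs
    rw [hev.deriv_eq]
    simpa using ((((hasDerivAt_id' t).add_const 1).add_const _).rpow_const (p := p)
      (Or.inl (by linarith : u ≠ 0))).const_mul a |>.deriv
  have hslice : (fun x => χ x t) = fun x => a * ((t + 1) + (x - ξ₀) ^ 2 / 4) ^ p :=
    funext fun x => hprofile x t (by linarith)
  have ht1 : 0 < t + 1 := by linarith
  rw [hdt, hslice, hprofile ξ t (by linarith), deriv_const_mul_field', deriv_const_mul_field']
  beta_reduce
  rw [deriv_deriv_rpow_add_sub_sq_div_four _ _ ht1, deriv_rpow_add_sub_sq_div_four _ _ ht1]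
  refine fastDiffOp_rpow_profile_nonpos hD.le hk hp ha.1.le ha.2.le (exp_pos _).le hu
    (by linarith) (by simp only [u]; nlinarith) ?_
  have hdecay := exp_neg_two_mul_mul_affine_le (by linarith : 0 ≤ D + 1)
    (by nlinarith : 0 ≤ -k * p) hk hξ.le
  linarith
end
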